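/- (Elimination of κ.) Let G = (V, E) be a finite connected simple graph and D = (V, A) the associated directed graph with both arcs on each edge. In the polynomial ring ℚ[κ_v : v ∈ V; P_a : a ∈ A], let J be the detailed balance ideal generated by Π_{v∈V} κ_v − 1 together with the polynomials κ_v P_{v→w} − κ_w P_{w→v} for all arcs (v→w) ∈ A. Then the intersection J ∩ ℚ[P_a : a ∈ A] (the elimination ideal eliminating the κ variables) equals the K-ideal, i.e., the ideal of ℚ[P_a : a ∈ A] generated by the binomials P^ω − P^{r(ω)} over all closed paths ω of D. -/

import Mathlib

/-- The arcs of the directed graph `D = (V, A)` associated to a simple graph `G`. -/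
abbrev Arc {V : Type*} (G : SimpleGraph V) : Type _ := {p : V × V // G.Adj p.1 p.2}

/-- The reversed arc. -/
def arcRev {V : Type*} {G : SimpleGraph V} (a : Arc G) : Arc G :=
  ⟨(a.1.2, a.1.1), a.2.symm⟩

/-!
In `ℚ[κ, P] ⧸ J` every `κ_v` is a unit, since their product is `1`, and
`κ_v P_{v→w} = κ_w P_{w→v}`; multiplying these relations along a closed path `ω` and cancelling
the `κ`'s gives `P^ω = P^{r(ω)}`. Conversely, `J` is homogeneous for the grading in which `κ_v`
has degree `(𝟙/|V| - e_v, 0)` and `P_a` has degree `(e_{tail a}, e_a + e_{r(a)})`, so its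
elimination ideal is spanned by binomials `P^m - P^{m'}` whose exponents have the same
out-degree at every vertex and the same multiplicity on every edge. If `m ≠ m'`, the arcs with
`m a < m' a` contain a cycle whose reverse lies in `m`; replacing the reverse by the cycle
changes `P^m` by a multiple of a generator of the K-ideal and brings `m` strictly closer to `m'`.
-/

open MvPolynomial Finsupp

namespace MvPolynomial

variable {σ R M : Type*} [CommRing R]

theorem sub_mapDomain_mem_span_binomial (r : (σ →₀ ℕ) → (σ →₀ ℕ)) (p : MvPolynomial σ R) :
    p - AddMonoidAlgebra.mapDomain r p ∈
      Ideal.span {q | ∃ m, q = monomial m (1 : R) - monomial (r m) 1} := by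
  induction p using MvPolynomial.induction_on' with
  | monomial m c =>
    have hmem : monomial m (1 : R) - monomial (r m) 1 ∈
        Ideal.span {q | ∃ m, q = monomial m (1 : R) - monomial (r m) 1} :=
      Ideal.subset_span ⟨m, rfl⟩
    convert Ideal.mul_mem_left _ (C c) hmem using 1
    rw [← single_eq_monomial, AddMonoidAlgebra.mapDomain_single, single_eq_monomial,
      single_eq_monomial, mul_sub, C_mul_monomial, C_mul_monomial, mul_one]
  | add p q hp hq =>
    rw [AddMonoidAlgebra.mapDomain_add, add_sub_add_comm]
    exact add_mem hp hq

/-- Modulo these binomials, `p` is congruent to the polynomial obtained by moving every monomial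
to a fixed representative of its fibre under `w`, and that polynomial is `0`. -/
theorem mem_span_binomial_of_mapDomain_eq_zero (w : (σ →₀ ℕ) → M) {p : MvPolynomial σ R}
    (hp : AddMonoidAlgebra.mapDomain w p = 0) :
    p ∈ Ideal.span {q | ∃ m m', w m = w m' ∧ q = monomial m (1 : R) - monomial m' 1} := by
  classical
  have hsection : AddMonoidAlgebra.mapDomain (Function.invFun w ∘ w) p = 0 := by
    rw [← AddMonoidAlgebra.mapDomain_zero (Function.invFun w), ← hp]
    exact AddMonoidAlgebra.ext mapDomain_comp
  have h := sub_mapDomain_mem_span_binomial (Function.invFun w ∘ w) p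
  rw [hsection, sub_zero] at h
  refine Ideal.span_mono ?_ h
  rintro q ⟨m, rfl⟩
  exact ⟨m, _, (Function.invFun_eq ⟨m, rfl⟩).symm, rfl⟩

theorem mapDomainRingHom_X [AddCommMonoid M] (W : (σ →₀ ℕ) →+ M) (s : σ) :
    AddMonoidAlgebra.mapDomainRingHom R W (X s) = AddMonoidAlgebra.single (W (single s 1)) 1 := by
  rw [X, ← single_eq_monomial]
  exact AddMonoidAlgebra.mapDomain_single

end MvPolynomial

theorem Fin.prod_eq_prod_of_mul_eq_mul_succ {M : Type*} [CommMonoid M] {n : ℕ}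
    {x y z : Fin (n + 1) → M} (hx : ∀ i, IsUnit (x i)) (h : ∀ i, x i * y i = x (i + 1) * z i) :
    ∏ i, y i = ∏ i, z i := by
  have hshift : ∏ i, x (i + 1) = ∏ i, x i :=
    Fintype.prod_equiv (Equiv.addRight 1) _ _ fun _ => rfl
  refine (IsUnit.prod_univ_iff.2 hx).mul_right_inj.1 ?_
  rw [← Finset.prod_mul_distrib, Fintype.prod_congr _ _ h, Finset.prod_mul_distrib, hshift]

open Function in
/-- Following successors from any point of a finite type eventually enters a periodic orbit. -/
theorem exists_injective_cycle {α : Type*} [Finite α] [Nonempty α] (r : α → α → Prop)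
    (hr : ∀ a, ∃ b, r a b) :
    ∃ (n : ℕ) (γ : Fin (n + 1) → α), Function.Injective γ ∧ ∀ i, r (γ i) (γ (i + 1)) := by
  choose f hf using hr
  obtain ⟨x⟩ := ‹Nonempty α›
  obtain ⟨i, j, hij, hx⟩ := Set.finite_univ.exists_lt_map_eq_of_forall_mem
    (f := fun k => f^[k] x) fun _ => Set.mem_univ _
  have hper : IsPeriodicPt f (j - i) (f^[i] x) := by
    rw [IsPeriodicPt, IsFixedPt, ← iterate_add_apply, Nat.sub_add_cancel hij.le, hx]
  obtain ⟨n, hn⟩ := Nat.exists_eq_add_one_of_ne_zero (hper.minimalPeriod_pos (by omega)).ne'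
  refine ⟨n, fun k => f^[k] (f^[i] x), fun k l hkl => ?_, fun k => ?_⟩
  · exact Fin.ext (iterate_injOn_Iio_minimalPeriod (by simp [hn, k.is_le])
      (by simp [hn, l.is_le]) hkl)
  · have hmod := iterate_mod_minimalPeriod_eq (f := f) (x := f^[i] x) (n := k + 1)
    have hk : ((k + 1 : Fin (n + 1)) : ℕ) = (k + 1) % (n + 1) := by simp [Fin.val_add]
    rw [hn] at hmod
    simp only [hk, hmod, iterate_succ_apply']
    exact hf _

section Ideals

variable {V : Type*} (R : Type*) [CommRing R] (G : SimpleGraph V)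

noncomputable def kIdeal : Ideal (MvPolynomial (Arc G) R) :=
  Ideal.span {f | ∃ (n : ℕ) (ω : Fin (n + 1) → V) (h : ∀ i, G.Adj (ω i) (ω (i + 1))),
    f = (∏ i, X (⟨(ω i, ω (i + 1)), h i⟩ : Arc G))
      - ∏ i, X (⟨(ω (i + 1), ω i), (h i).symm⟩ : Arc G)}

noncomputable def detailedBalanceIdeal [Fintype V] : Ideal (MvPolynomial (V ⊕ Arc G) R) :=
  Ideal.span ({(∏ v : V, X (Sum.inl v)) - 1} ∪
    {f | ∃ a : Arc G, f = X (Sum.inl a.1.1) * X (Sum.inr a)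
      - X (Sum.inl a.1.2) * X (Sum.inr (arcRev a))})

theorem kIdeal_le_comap_detailedBalanceIdeal [Fintype V] :
    kIdeal R G ≤ (detailedBalanceIdeal R G).comap
      (rename Sum.inr : MvPolynomial (Arc G) R →ₐ[R] MvPolynomial (V ⊕ Arc G) R).toRingHom := by
  rw [kIdeal, Ideal.span_le]
  rintro _ ⟨n, ω, h, rfl⟩
  rw [SetLike.mem_coe, Ideal.mem_comap, ← Ideal.Quotient.eq_zero_iff_mem]
  set q := Ideal.Quotient.mk (detailedBalanceIdeal R G)
  have hq : ∀ f ∈ detailedBalanceIdeal R G, q f = 0 := fun f => Ideal.Quotient.eq_zero_iff_mem.2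
  have hprod : ∏ v : V, q (X (Sum.inl v)) = 1 := by
    rw [← map_prod, ← sub_eq_zero, ← map_one q, ← map_sub]
    exact hq _ (Ideal.subset_span (.inl rfl))
  have hunit : ∀ v, IsUnit (q (X (Sum.inl v))) := fun v =>
    isUnit_of_dvd_one (hprod ▸ Finset.dvd_prod_of_mem _ (Finset.mem_univ v))
  have hbalance : ∀ a : Arc G, q (X (Sum.inl a.1.1)) * q (X (Sum.inr a)) =
      q (X (Sum.inl a.1.2)) * q (X (Sum.inr (arcRev a))) := fun a => by
    rw [← map_mul, ← map_mul, ← sub_eq_zero, ← map_sub]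
    exact hq _ (Ideal.subset_span (.inr ⟨a, rfl⟩))
  simp only [AlgHom.toRingHom_eq_coe, RingHom.coe_coe, map_sub, map_prod, rename_X, sub_eq_zero]
  exact Fin.prod_eq_prod_of_mul_eq_mul_succ (fun i => hunit (ω i))
    fun i => hbalance ⟨(ω i, ω (i + 1)), h i⟩

end Ideals

section ArcRev

variable {V : Type*} {G : SimpleGraph V}

@[simp] lemma arcRev_arcRev (a : Arc G) : arcRev (arcRev a) = a := rfl

lemma arcRev_injective : Function.Injective (arcRev : Arc G → Arc G) :=
  Function.LeftInverse.injective arcRev_arcRev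

end ArcRev

namespace Arc

variable {V : Type*} {G : SimpleGraph V}

variable (G) in
noncomputable def outDegree : (Arc G →₀ ℕ) →+ (V →₀ ℕ) :=
  mapDomain.addMonoidHom fun a => a.1.1

variable (G) in
noncomputable def edgeCount : (Arc G →₀ ℕ) →+ (Arc G →₀ ℕ) :=
  .id _ + mapDomain.addMonoidHom arcRev

lemma outDegree_single (a : Arc G) (k : ℕ) : outDegree G (single a k) = single a.1.1 k := by
  simp [outDegree]

lemma edgeCount_single (a : Arc G) (k : ℕ) :
    edgeCount G (single a k) = single a k + single (arcRev a) k := by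
  simp [edgeCount]

lemma edgeCount_apply (m : Arc G →₀ ℕ) (a : Arc G) :
    edgeCount G m a = m a + m (arcRev a) := by
  simpa [edgeCount] using mapDomain_apply arcRev_injective m (arcRev a)

lemma edgeCount_eq_edgeCount_iff {m m' : Arc G →₀ ℕ} :
    edgeCount G m = edgeCount G m' ↔ ∀ a, m a + m (arcRev a) = m' a + m' (arcRev a) := by
  simp only [Finsupp.ext_iff, edgeCount_apply]

lemma outDegree_apply [Fintype V] [DecidableEq V] [DecidableRel G.Adj]
    (m : Arc G →₀ ℕ) (v : V) : outDegree G m v = ∑ a with a.1.1 = v, m a := by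
  simp [outDegree, mapDomain, Finsupp.sum_fintype, single_apply, Finset.sum_filter]

variable {n : ℕ}

noncomputable def count (γ : Fin (n + 1) → Arc G) : Arc G →₀ ℕ := ∑ i, single (γ i) 1

variable {γ : Fin (n + 1) → Arc G}

lemma monomial_count {R : Type*} [CommRing R] : monomial (count γ) (1 : R) = ∏ i, X (γ i) := by
  simp [count, monomial_sum_one, X]

lemma count_apply_le_one (hγ : Function.Injective γ) (a : Arc G) : count γ a ≤ 1 := by
  classical
  simp only [count, finsetSum_apply, single_apply, Finset.sum_boole]
  exact_mod_cast Finset.card_le_one.2 fun i hi j hj => hγ <| by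
    simp only [Finset.mem_filter] at hi hj
    rw [hi.2, hj.2]

lemma count_apply_self_pos (γ : Fin (n + 1) → Arc G) (i : Fin (n + 1)) : 0 < count γ (γ i) := by
  classical
  simp only [count, finsetSum_apply, single_apply, Finset.sum_boole]
  exact_mod_cast Finset.card_pos.2 ⟨i, by simp⟩

lemma exists_eq_of_count_ne_zero {a : Arc G} (h : count γ a ≠ 0) : ∃ i, γ i = a := by
  classical
  simp only [count, finsetSum_apply, single_apply, Finset.sum_boole] at h
  obtain ⟨i, hi⟩ := Finset.card_ne_zero.1 (by exact_mod_cast h)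
  exact ⟨i, (Finset.mem_filter.1 hi).2⟩

lemma edgeCount_count_arcRev : edgeCount G (count (arcRev ∘ γ)) = edgeCount G (count γ) := by
  simp [count, edgeCount_single, add_comm]

lemma outDegree_count_arcRev (hγ : ∀ i, (γ i).1.2 = (γ (i + 1)).1.1) :
    outDegree G (count (arcRev ∘ γ)) = outDegree G (count γ) := by
  simp only [count, map_sum, outDegree_single, Function.comp_apply, arcRev, hγ]
  exact Fintype.sum_equiv (Equiv.addRight 1) _ _ fun _ => rfl

end Arc

open Arc

section Circulation

variable {V : Type*} {G : SimpleGraph V} {m m' : Arc G →₀ ℕ}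

lemma exists_succ_lt_of_lt [Finite V] (hout : outDegree G m = outDegree G m')
    (hedge : edgeCount G m = edgeCount G m') {a : Arc G} (ha : m a < m' a) :
    ∃ b : Arc G, b.1.1 = a.1.2 ∧ m b < m' b := by
  classical
  have := Fintype.ofFinite V
  by_contra! hge
  have hrev : m' (arcRev a) < m (arcRev a) := by
    have := edgeCount_eq_edgeCount_iff.1 hedge a
    omega
  have hlt : outDegree G m' a.1.2 < outDegree G m a.1.2 := by
    rw [outDegree_apply, outDegree_apply]
    exact Finset.sum_lt_sum (fun b hb => hge b (Finset.mem_filter.1 hb).2)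
      ⟨arcRev a, by simp [arcRev], hrev⟩
  exact hlt.ne (hout ▸ rfl)

lemma exists_cycle_lt [Finite V] (hout : outDegree G m = outDegree G m')
    (hedge : edgeCount G m = edgeCount G m') (hne : m ≠ m') :
    ∃ (n : ℕ) (γ : Fin (n + 1) → Arc G), Function.Injective γ ∧ (∀ i, m (γ i) < m' (γ i)) ∧
      ∀ i, (γ i).1.2 = (γ (i + 1)).1.1 := by
  obtain ⟨a, ha⟩ : ∃ a, m a < m' a := by
    obtain ⟨a, hne⟩ := Finsupp.ne_iff.1 hne
    have := edgeCount_eq_edgeCount_iff.1 hedge a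
    rcases Nat.lt_or_gt_of_ne hne with h | h
    · exact ⟨a, h⟩
    · exact ⟨arcRev a, by omega⟩
  have : Nonempty {a // m a < m' a} := ⟨⟨a, ha⟩⟩
  obtain ⟨n, γ, hinj, hγ⟩ :=
    exists_injective_cycle (fun a b : {a // m a < m' a} => a.1.1.2 = b.1.1.1) fun a => by
      obtain ⟨b, hb, hlt⟩ := exists_succ_lt_of_lt hout hedge a.2
      exact ⟨⟨b, hlt⟩, hb.symm⟩
  exact ⟨n, fun i => (γ i).1, Subtype.val_injective.comp hinj, fun i => (γ i).2, hγ⟩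

section Swap

variable {n : ℕ} {γ : Fin (n + 1) → Arc G}

lemma lt_of_count_ne_zero (hpos : ∀ i, m (γ i) < m' (γ i)) {a : Arc G} (h : count γ a ≠ 0) :
    m a < m' a := by
  obtain ⟨i, rfl⟩ := exists_eq_of_count_ne_zero h
  exact hpos i

lemma lt_of_count_arcRev_ne_zero (hedge : edgeCount G m = edgeCount G m')
    (hpos : ∀ i, m (γ i) < m' (γ i)) {a : Arc G} (h : count (arcRev ∘ γ) a ≠ 0) :
    m' a < m a := by
  obtain ⟨i, rfl⟩ := exists_eq_of_count_ne_zero h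
  have := edgeCount_eq_edgeCount_iff.1 hedge (γ i)
  have := hpos i
  simp only [Function.comp_apply]
  omega

variable (hedge : edgeCount G m = edgeCount G m') (hinj : Function.Injective γ)
  (hpos : ∀ i, m (γ i) < m' (γ i))
include hedge hinj hpos

lemma count_arcRev_le : count (arcRev ∘ γ) ≤ m := fun a => by
  have := count_apply_le_one (arcRev_injective.comp hinj) a
  have := lt_of_count_arcRev_ne_zero hedge hpos (a := a)
  omega

lemma sub_count_add_sub_count_arcRev_lt : m' - (count γ + (m - count (arcRev ∘ γ))) < m' - m := by
  refine Finsupp.lt_def.2 ⟨fun a => ?_, γ 0, ?_⟩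
  · have := count_apply_le_one hinj a
    have := count_apply_le_one (arcRev_injective.comp hinj) a
    have := lt_of_count_ne_zero hpos (a := a)
    have := lt_of_count_arcRev_ne_zero hedge hpos (a := a)
    simp only [tsub_apply, Finsupp.coe_add, Pi.add_apply]
    omega
  · have := count_apply_self_pos γ 0
    have := lt_of_count_arcRev_ne_zero hedge hpos (a := γ 0)
    have := hpos 0
    simp only [tsub_apply, Finsupp.coe_add, Pi.add_apply]
    omega

end Swap

end Circulation

section KIdeal

variable {V : Type*} {R : Type*} [CommRing R] {G : SimpleGraph V}

lemma prod_X_sub_prod_X_arcRev_mem_kIdeal {n : ℕ} {γ : Fin (n + 1) → Arc G}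
    (hγ : ∀ i, (γ i).1.2 = (γ (i + 1)).1.1) :
    ∏ i, X (γ i) - ∏ i, X (arcRev (γ i)) ∈ kIdeal R G := by
  have hadj : ∀ i, G.Adj (γ i).1.1 (γ (i + 1)).1.1 := fun i => hγ i ▸ (γ i).2
  refine Ideal.subset_span ⟨n, fun i => (γ i).1.1, hadj, ?_⟩
  congr 1 <;> refine Finset.prod_congr rfl fun i _ => congrArg X (Subtype.ext ?_)
  · exact Prod.ext rfl (hγ i)
  · exact Prod.ext (hγ i) rfl

variable [Finite V] {m m' : Arc G →₀ ℕ}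

lemma exists_closer_of_ne (hout : outDegree G m = outDegree G m')
    (hedge : edgeCount G m = edgeCount G m') (hne : m ≠ m') :
    ∃ m₁, outDegree G m₁ = outDegree G m' ∧ edgeCount G m₁ = edgeCount G m' ∧
      m' - m₁ < m' - m ∧ monomial m (1 : R) - monomial m₁ 1 ∈ kIdeal R G := by
  obtain ⟨n, γ, hinj, hpos, hclosed⟩ := exists_cycle_lt hout hedge hne
  have hm : count (arcRev ∘ γ) + (m - count (arcRev ∘ γ)) = m :=
    add_tsub_cancel_of_le (count_arcRev_le hedge hinj hpos)
  refine ⟨count γ + (m - count (arcRev ∘ γ)), ?_, ?_,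
    sub_count_add_sub_count_arcRev_lt hedge hinj hpos, ?_⟩
  · rw [← hout, map_add, ← outDegree_count_arcRev hclosed, ← map_add, hm]
  · rw [← hedge, map_add, ← edgeCount_count_arcRev, ← map_add, hm]
  · have hsplit : ∀ x y : Arc G →₀ ℕ, monomial (x + y) (1 : R) = monomial x 1 * monomial y 1 :=
      fun x y => by rw [monomial_mul, mul_one]
    nth_rewrite 1 [← hm]
    rw [hsplit, hsplit, monomial_count (R := R), monomial_count (R := R), ← sub_mul, ← neg_sub]
    simp only [Function.comp_apply]
    exact Ideal.mul_mem_right _ _ (neg_mem (prod_X_sub_prod_X_arcRev_mem_kIdeal hclosed))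

theorem monomial_sub_monomial_mem_kIdeal (hout : outDegree G m = outDegree G m')
    (hedge : edgeCount G m = edgeCount G m') :
    monomial m (1 : R) - monomial m' 1 ∈ kIdeal R G := by
  generalize hd : m' - m = d
  induction d using WellFoundedLT.induction generalizing m with
  | _ d ih =>
    by_cases hne : m = m'
    · rw [hne, sub_self]
      exact zero_mem _
    obtain ⟨m₁, hout₁, hedge₁, hlt, hmem⟩ := exists_closer_of_ne (R := R) hout hedge hne
    rw [← sub_add_sub_cancel _ (monomial m₁ 1)]
    exact add_mem hmem (ih _ (hd ▸ hlt) hout₁ hedge₁ rfl)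

end KIdeal

section Elimination

variable {V : Type*} [Fintype V] (G : SimpleGraph V)

noncomputable def detailedBalanceWeight : (V ⊕ Arc G →₀ ℕ) →+ (V → ℚ) × (Arc G →₀ ℕ) :=
  liftAddHom fun s => multiplesHom _ <| Sum.elim
    (fun v => (fun u => (Fintype.card V : ℚ)⁻¹ - (single v 1 u : ℕ), 0))
    (fun a => (fun u => (outDegree G (single a 1) u : ℚ), edgeCount G (single a 1))) s

variable {G}

lemma detailedBalanceWeight_mapDomain_inr (m : Arc G →₀ ℕ) :
    detailedBalanceWeight G (m.mapDomain Sum.inr) =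
      (fun v => (outDegree G m v : ℚ), edgeCount G m) := by
  induction m using Finsupp.induction_linear with
  | zero => ext <;> simp
  | add x y hx hy =>
    rw [mapDomain_add, map_add, hx, hy, map_add, map_add]
    ext <;> simp
  | single a k =>
    classical
    ext v <;> simp [detailedBalanceWeight, outDegree_single, edgeCount_single, single_apply]

lemma sum_detailedBalanceWeight_inl :
    ∑ v, detailedBalanceWeight G (single (Sum.inl v) 1) = 0 := by
  classical
  ext u
  · have : Nonempty V := ⟨u⟩
    simp [detailedBalanceWeight, Prod.fst_sum, Finset.sum_apply, single_apply,
      Finset.sum_sub_distrib]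
  · simp [detailedBalanceWeight, Prod.snd_sum]

lemma detailedBalanceWeight_balance (a : Arc G) :
    detailedBalanceWeight G (single (Sum.inl a.1.1) 1) +
        detailedBalanceWeight G (single (Sum.inr a) 1) =
      detailedBalanceWeight G (single (Sum.inl a.1.2) 1) +
        detailedBalanceWeight G (single (Sum.inr (arcRev a)) 1) := by
  ext u
  · simp [detailedBalanceWeight, outDegree_single, arcRev]
  · simp [detailedBalanceWeight, edgeCount_single, add_comm]

variable (R : Type*) [CommRing R]

theorem detailedBalanceIdeal_le_ker :
    detailedBalanceIdeal R G ≤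
      RingHom.ker (AddMonoidAlgebra.mapDomainRingHom R (detailedBalanceWeight G)) := by
  rw [detailedBalanceIdeal, Ideal.span_le]
  rintro _ (rfl | ⟨a, rfl⟩) <;>
    simp only [SetLike.mem_coe, RingHom.mem_ker, map_sub, map_mul, map_prod, map_one,
      mapDomainRingHom_X, AddMonoidAlgebra.prod_single, AddMonoidAlgebra.single_mul_single,
      sub_eq_zero]
  · rw [sum_detailedBalanceWeight_inl, Finset.prod_const_one, AddMonoidAlgebra.one_def]
  · rw [detailedBalanceWeight_balance]

theorem comap_detailedBalanceIdeal_le_kIdeal :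
    (detailedBalanceIdeal R G).comap
      (rename Sum.inr : MvPolynomial (Arc G) R →ₐ[R] MvPolynomial (V ⊕ Arc G) R).toRingHom ≤
      kIdeal R G := by
  intro f hf
  have hker : AddMonoidAlgebra.mapDomain (detailedBalanceWeight G ∘ mapDomain Sum.inr) f = 0 := by
    rw [← RingHom.mem_ker.1 (detailedBalanceIdeal_le_ker R hf)]
    exact AddMonoidAlgebra.ext mapDomain_comp
  refine Ideal.span_le.2 ?_ (mem_span_binomial_of_mapDomain_eq_zero _ hker)
  rintro _ ⟨m, m', h, rfl⟩
  simp only [Function.comp_apply, detailedBalanceWeight_mapDomain_inr, Prod.mk.injEq] at h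
  exact monomial_sub_monomial_mem_kIdeal (Finsupp.ext fun v => by exact_mod_cast congrFun h.1 v) h.2

theorem comap_rename_detailedBalanceIdeal :
    (detailedBalanceIdeal R G).comap
      (rename Sum.inr : MvPolynomial (Arc G) R →ₐ[R] MvPolynomial (V ⊕ Arc G) R).toRingHom =
      kIdeal R G :=
  (comap_detailedBalanceIdeal_le_kIdeal R).antisymm (kIdeal_le_comap_detailedBalanceIdeal R G)

end Elimination

theorem stmt_17_general {V : Type*} [Fintype V]
    (G : SimpleGraph V) :
    Ideal.comap
      (MvPolynomial.rename (Sum.inr : Arc G → V ⊕ Arc G) :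
        MvPolynomial (Arc G) ℚ →ₐ[ℚ] MvPolynomial (V ⊕ Arc G) ℚ).toRingHom
      (Ideal.span
        ({(∏ v : V, MvPolynomial.X (Sum.inl v : V ⊕ Arc G)) - 1} ∪
         {f : MvPolynomial (V ⊕ Arc G) ℚ | ∃ a : Arc G,
            f = MvPolynomial.X (Sum.inl (a : V × V).1) * MvPolynomial.X (Sum.inr a)
              - MvPolynomial.X (Sum.inl (a : V × V).2) * MvPolynomial.X (Sum.inr (arcRev a))})) =
    Ideal.span {f : MvPolynomial (Arc G) ℚ |
      ∃ (n : ℕ) (ω : Fin (n + 1) → V) (h : ∀ i, G.Adj (ω i) (ω (i + 1))),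
        f = (∏ i, MvPolynomial.X (⟨(ω i, ω (i + 1)), h i⟩ : Arc G))
          - ∏ i, MvPolynomial.X (⟨(ω (i + 1), ω i), (h i).symm⟩ : Arc G)} :=
  comap_rename_detailedBalanceIdeal (G := G) ℚ

/-- elimination of κ: the elimination ideal of the detailed balance ideal
`J = (Π_v κ_v − 1, κ_v P_{v→w} − κ_w P_{w→v} : (v→w) ∈ A)` obtained by eliminating the `κ`
variables equals the K-ideal, generated by the binomials `P^ω − P^{r(ω)}` over all closed
paths `ω`. Here `ℚ[P_a : a ∈ A]` is embedded into `ℚ[κ_v ; P_a]` by renaming variables. -/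
theorem stmt_17 {V : Type*} [Fintype V] [DecidableEq V]
    (G : SimpleGraph V) [DecidableRel G.Adj] (hG : G.Connected) :
    Ideal.comap
      (MvPolynomial.rename (Sum.inr : Arc G → V ⊕ Arc G) :
        MvPolynomial (Arc G) ℚ →ₐ[ℚ] MvPolynomial (V ⊕ Arc G) ℚ).toRingHom
      (Ideal.span
        ({(∏ v : V, MvPolynomial.X (Sum.inl v : V ⊕ Arc G)) - 1} ∪
         {f : MvPolynomial (V ⊕ Arc G) ℚ | ∃ a : Arc G,
            f = MvPolynomial.X (Sum.inl (a : V × V).1) * MvPolynomial.X (Sum.inr a)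
              - MvPolynomial.X (Sum.inl (a : V × V).2) * MvPolynomial.X (Sum.inr (arcRev a))})) =
    Ideal.span {f : MvPolynomial (Arc G) ℚ |
      ∃ (n : ℕ) (ω : Fin (n + 1) → V) (h : ∀ i, G.Adj (ω i) (ω (i + 1))),
        f = (∏ i, MvPolynomial.X (⟨(ω i, ω (i + 1)), h i⟩ : Arc G))
          - ∏ i, MvPolynomial.X (⟨(ω (i + 1), ω i), (h i).symm⟩ : Arc G)} :=
  stmt_17_general G
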